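/- arXiv:1102.4972 — 6 statements merged into one kernel-verified Lean document; each statement's English description precedes it below -/
import Mathlib

section
/- Let P ⊆ ℝ^d be a finite set of N points and let 1 ≤ k ≤ N be an integer. Then for every x ∈ ℝ^d, d_{P,k}(x)² = min over subsets C ⊆ P with |C| = k of (‖x − c̄_C‖² − w_{c̄_C}), where c̄_C = (1/k) Σ_{p∈C} p is the barycenter of C and w_{c̄_C} = −(1/k) Σ_{p∈C} ‖c̄_C − p‖². In other words, the squared k-distance is the power distance to the set of barycenters of k-point subsets of P with these weights. -/
/-! By the parallel axis theorem, the mean squared distance from `x` to a `k`-subset `C` is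
`‖x - c̄_C‖²` plus the mean squared spread of `C` about `c̄_C`, and that spread is `-w_{c̄_C}`.
So both infima run over the same set of values, and the square root in `kdist` is undone
because those values are nonnegative. -/

open MeasureTheory Metric Finset

noncomputable section

/-- The barycenter of a finite set `C` of points, viewed as a set of `k` points. -/
def bary {d : ℕ} (k : ℕ) (C : Finset (EuclideanSpace ℝ (Fin d))) :
    EuclideanSpace ℝ (Fin d) :=
  (k : ℝ)⁻¹ • ∑ p ∈ C, p

/-- The weight `w_{c̄_C} = -(1/k) ∑_{p ∈ C} ‖c̄_C - p‖²` of the barycenter of `C`. -/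
def wt {d : ℕ} (k : ℕ) (C : Finset (EuclideanSpace ℝ (Fin d))) : ℝ :=
  -((k : ℝ)⁻¹ * ∑ p ∈ C, ‖bary k C - p‖ ^ 2)

/-- The `k`-distance to a finite point set `P`:
`d_{P,k}(x)² = min_{C ⊆ P, |C| = k} (1/k) ∑_{p ∈ C} ‖x - p‖²`. -/
def kdist {d : ℕ} (P : Finset (EuclideanSpace ℝ (Fin d))) (k : ℕ)
    (x : EuclideanSpace ℝ (Fin d)) : ℝ :=
  Real.sqrt (sInf { y : ℝ | ∃ C ∈ P.powersetCard k, y = (k : ℝ)⁻¹ * ∑ p ∈ C, ‖x - p‖ ^ 2 })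

/-- Parallel axis theorem: the cross terms vanish because `c` is the mean of `C`. -/
theorem sum_norm_sub_sq_eq_card_mul_add {E : Type*} [NormedAddCommGroup E]
    [InnerProductSpace ℝ E] (C : Finset E) {c : E} (hc : (#C : ℝ) • c = ∑ p ∈ C, p) (x : E) :
    ∑ p ∈ C, ‖x - p‖ ^ 2 = #C * ‖x - c‖ ^ 2 + ∑ p ∈ C, ‖c - p‖ ^ 2 := by
  have hdev : ∑ p ∈ C, (c - p) = 0 := by
    rw [sum_sub_distrib, sum_const, ← Nat.cast_smul_eq_nsmul ℝ, hc, sub_self]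
  calc ∑ p ∈ C, ‖x - p‖ ^ 2
      = ∑ p ∈ C, (‖x - c‖ ^ 2 + 2 * inner ℝ (x - c) (c - p) + ‖c - p‖ ^ 2) := by
        refine sum_congr rfl fun p _ => ?_
        rw [← norm_add_sq_real, sub_add_sub_cancel]
    _ = #C * ‖x - c‖ ^ 2 + 2 * inner ℝ (x - c) (∑ p ∈ C, (c - p)) + ∑ p ∈ C, ‖c - p‖ ^ 2 := by
        rw [sum_add_distrib, sum_add_distrib, sum_const, nsmul_eq_mul, ← mul_sum, inner_sum]
    _ = #C * ‖x - c‖ ^ 2 + ∑ p ∈ C, ‖c - p‖ ^ 2 := by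
        rw [hdev, inner_zero_right, mul_zero, add_zero]

theorem card_smul_bary {d k : ℕ} {C : Finset (EuclideanSpace ℝ (Fin d))} (hC : #C = k)
    (hk : k ≠ 0) : (#C : ℝ) • bary k C = ∑ p ∈ C, p := by
  rw [bary, smul_smul, hC, mul_inv_cancel₀ (Nat.cast_ne_zero.mpr hk), one_smul]

theorem inv_mul_sum_norm_sub_sq_eq_norm_sub_bary_sq_sub_wt {d k : ℕ}
    {C : Finset (EuclideanSpace ℝ (Fin d))} (hC : #C = k) (hk : k ≠ 0)
    (x : EuclideanSpace ℝ (Fin d)) :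
    (k : ℝ)⁻¹ * ∑ p ∈ C, ‖x - p‖ ^ 2 = ‖x - bary k C‖ ^ 2 - wt k C := by
  have hk' : (k : ℝ) ≠ 0 := Nat.cast_ne_zero.mpr hk
  rw [sum_norm_sub_sq_eq_card_mul_add C (card_smul_bary hC hk), hC, wt, mul_add,
    inv_mul_cancel_left₀ hk', sub_neg_eq_add]

theorem kdist_sq_eq_power_distance_general {d : ℕ} (k : ℕ)
    (P : Finset (EuclideanSpace ℝ (Fin d)))
    (hk : 1 ≤ k) (x : EuclideanSpace ℝ (Fin d)) :
    (kdist P k x) ^ 2 =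
      sInf { y : ℝ | ∃ C ∈ P.powersetCard k, y = ‖x - bary k C‖ ^ 2 - wt k C } := by
  have hmean : ∀ C ∈ P.powersetCard k,
      (k : ℝ)⁻¹ * ∑ p ∈ C, ‖x - p‖ ^ 2 = ‖x - bary k C‖ ^ 2 - wt k C := fun C hC =>
    inv_mul_sum_norm_sub_sq_eq_norm_sub_bary_sq_sub_wt (mem_powersetCard.mp hC).2
      (Nat.one_le_iff_ne_zero.mp hk) x
  have hnonneg : 0 ≤ sInf { y : ℝ | ∃ C ∈ P.powersetCard k,
      y = (k : ℝ)⁻¹ * ∑ p ∈ C, ‖x - p‖ ^ 2 } :=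
    Real.sInf_nonneg fun y ⟨C, _, hy⟩ => hy ▸ by positivity
  rw [kdist, Real.sq_sqrt hnonneg]
  congr 1
  ext y
  exact exists_congr fun C => and_congr_right fun hC => by rw [hmean C hC]

/-- The squared `k`-distance is the power distance to the set of
barycenters of `k`-point subsets of `P` with weights `w_{c̄_C}`. -/
theorem kdist_sq_eq_power_distance {d : ℕ} (N k : ℕ)
    (P : Finset (EuclideanSpace ℝ (Fin d))) (hPN : P.card = N)
    (hk : 1 ≤ k) (hkN : k ≤ N) (x : EuclideanSpace ℝ (Fin d)) :
    (kdist P k x) ^ 2 =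
      sInf { y : ℝ | ∃ C ∈ P.powersetCard k, y = ‖x - bary k C‖ ^ 2 - wt k C } :=
  kdist_sq_eq_power_distance_general k P hk x

end
end

section
/- Let P ⊆ ℝ^d be a finite set of N points, 1 ≤ k ≤ N, and ρ ≥ 0. Then a point x ∈ ℝ^d satisfies d_{P,k}(x) ≤ ρ if and only if there exists a subset C ⊆ P with |C| = k such that ‖x − c̄_C‖² ≤ ρ² + w_{c̄_C}; i.e., the sublevel set d_{P,k}^{-1}([0,ρ]) equals the union over k-point subsets C of P of the closed balls centered at the barycenters c̄_C with squared radius ρ² + w_{c̄_C} (the ball being empty when ρ² + w_{c̄_C} < 0). -/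
open MeasureTheory Metric Finset

noncomputable section

/-!
By the parallel axis theorem, the mean squared distance from `x` to a `k`-point set `C` is
`‖x - c̄_C‖² - w_{c̄_C}`. Since `d_{P,k}(x)²` is the minimum of these means over the finitely many
`C`, it is at most `ρ²` exactly when one of them is.
-/

theorem sInf_setOf_exists_eq_le_iff {ι α : Type*} [ConditionallyCompleteLinearOrder α]
    {s : Finset ι} (hs : s.Nonempty) (f : ι → α) (a : α) :
    sInf {y | ∃ i ∈ s, y = f i} ≤ a ↔ ∃ i ∈ s, f i ≤ a := by
  have hset : {y | ∃ i ∈ s, y = f i} = f '' s := by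
    ext y
    simp [eq_comm]
  rw [hset, ← s.inf'_eq_csInf_image hs, Finset.inf'_le_iff]

theorem sum_norm_sub_sq_eq_of_sum_sub_eq_zero {E ι : Type*} [NormedAddCommGroup E]
    [InnerProductSpace ℝ E] {s : Finset ι} {p : ι → E} {c : E}
    (hc : ∑ i ∈ s, (c - p i) = 0) (x : E) :
    ∑ i ∈ s, ‖x - p i‖ ^ 2 = #s * ‖x - c‖ ^ 2 + ∑ i ∈ s, ‖c - p i‖ ^ 2 := by
  have hsplit : ∀ i ∈ s, ‖x - p i‖ ^ 2
      = ‖x - c‖ ^ 2 + 2 * inner ℝ (x - c) (c - p i) + ‖c - p i‖ ^ 2 := fun i _ => by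
    rw [← norm_add_sq_real, sub_add_sub_cancel]
  rw [Finset.sum_congr rfl hsplit, Finset.sum_add_distrib, Finset.sum_add_distrib,
    ← Finset.mul_sum, ← inner_sum, hc, inner_zero_right, Finset.sum_const, nsmul_eq_mul]
  ring

section

variable {d k : ℕ}

theorem sum_bary_sub_eq_zero (hk : k ≠ 0) {C : Finset (EuclideanSpace ℝ (Fin d))}
    (hC : #C = k) : ∑ p ∈ C, (bary k C - p) = 0 := by
  rw [Finset.sum_sub_distrib, Finset.sum_const, hC, bary, ← Nat.cast_smul_eq_nsmul ℝ,
    smul_smul, mul_inv_cancel₀ (Nat.cast_ne_zero.2 hk), one_smul, sub_self]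

theorem inv_mul_sum_norm_sub_sq_eq_sub_wt (hk : k ≠ 0) {C : Finset (EuclideanSpace ℝ (Fin d))}
    (hC : #C = k) (x : EuclideanSpace ℝ (Fin d)) :
    (k : ℝ)⁻¹ * ∑ p ∈ C, ‖x - p‖ ^ 2 = ‖x - bary k C‖ ^ 2 - wt k C := by
  have hkR : (k : ℝ) ≠ 0 := Nat.cast_ne_zero.2 hk
  rw [sum_norm_sub_sq_eq_of_sum_sub_eq_zero (sum_bary_sub_eq_zero hk hC), hC, wt]
  field_simp
  ring

theorem kdist_le_iff {P : Finset (EuclideanSpace ℝ (Fin d))} (hP : (P.powersetCard k).Nonempty)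
    {ρ : ℝ} (hρ : 0 ≤ ρ) (x : EuclideanSpace ℝ (Fin d)) :
    kdist P k x ≤ ρ ↔ ∃ C ∈ P.powersetCard k, (k : ℝ)⁻¹ * ∑ p ∈ C, ‖x - p‖ ^ 2 ≤ ρ ^ 2 := by
  rw [kdist, Real.sqrt_le_left hρ, sInf_setOf_exists_eq_le_iff hP]

end

/-- A point `x` lies in the `ρ`-sublevel set of the `k`-distance iff `x`
belongs to one of the closed balls centered at a barycenter `c̄_C` of a `k`-point subset
`C ⊆ P`, with squared radius `ρ² + w_{c̄_C}`. -/
theorem kdist_sublevel_eq_union_balls {d : ℕ} (N k : ℕ)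
    (P : Finset (EuclideanSpace ℝ (Fin d))) (hPN : P.card = N)
    (hk : 1 ≤ k) (hkN : k ≤ N) (ρ : ℝ) (hρ : 0 ≤ ρ) (x : EuclideanSpace ℝ (Fin d)) :
    kdist P k x ≤ ρ ↔
      ∃ C ∈ P.powersetCard k, ‖x - bary k C‖ ^ 2 ≤ ρ ^ 2 + wt k C := by
  have hk0 : k ≠ 0 := by omega
  rw [kdist_le_iff (powersetCard_nonempty.2 (hPN ▸ hkN)) hρ]
  refine exists_congr fun C => and_congr_right fun hC => ?_
  rw [inv_mul_sum_norm_sub_sq_eq_sub_wt hk0 (mem_powersetCard.1 hC).2, sub_le_iff_le_add]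

end
end

section
/- Let P ⊆ ℝ^d be a finite set of N points and 1 ≤ k ≤ N. Then for every x ∈ ℝ^d, d_{P,k}(x) ≤ d^w_{P,k}(x) ≤ (2 + √2) · d_{P,k}(x). -/
open MeasureTheory Metric Finset

noncomputable section

/-- `C` is a witnessed `k`-subset of `P`: it is a `k`-point subset of `P` containing some
point `x ∈ P` and minimizing `∑_{p ∈ C} ‖x - p‖²` among all `k`-point subsets of `P`
containing `x`; its barycenter is a witnessed `k`-barycenter (`x` and its `k-1` nearest
neighbors in `P`). -/
def IsWitnessed {d : ℕ} (P : Finset (EuclideanSpace ℝ (Fin d))) (k : ℕ)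
    (C : Finset (EuclideanSpace ℝ (Fin d))) : Prop :=
  ∃ x ∈ P, C ∈ P.powersetCard k ∧ x ∈ C ∧
    ∀ C' ∈ P.powersetCard k, x ∈ C' →
      ∑ p ∈ C, ‖x - p‖ ^ 2 ≤ ∑ p ∈ C', ‖x - p‖ ^ 2

/-- The witnessed `k`-distance: the power distance to the witnessed `k`-barycenters. -/
def wkdist {d : ℕ} (P : Finset (EuclideanSpace ℝ (Fin d))) (k : ℕ)
    (y : EuclideanSpace ℝ (Fin d)) : ℝ :=
  Real.sqrt (sInf { v : ℝ | ∃ C : Finset (EuclideanSpace ℝ (Fin d)),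
    IsWitnessed P k C ∧ v = ‖y - bary k C‖ ^ 2 - wt k C })

/-! By the parallel-axis identity, the power distance from `y` to the witnessed barycenter
`c̄_C` is the mean squared distance from `y` to the points of `C`. Hence `d_{P,k}` and `d^w_{P,k}`
are both minima of the root-mean-square distance `rmsDist k C` over families of `k`-subsets `C`,
the second family being contained in the first; this is the lower bound.

For the upper bound let `C*` realise `d_{P,k}(x)` and pick `q ∈ C*` with `‖x - q‖ ≤ d_{P,k}(x)`.
The witnessed subset `C` of `q` satisfies `rmsDist k C q ≤ rmsDist k C* q`, and `rmsDist k C` is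
`1`-Lipschitz (Minkowski's inequality), so
`d^w_{P,k}(x) ≤ rmsDist k C x ≤ ‖x - q‖ + rmsDist k C* q ≤ 2‖x - q‖ + d_{P,k}(x) ≤ 3 d_{P,k}(x)`,
and `3 ≤ 2 + √2`. -/

lemma sqrt_sum_add_sq_le {ι : Type*} (s : Finset ι) {f g : ι → ℝ}
    (hf : ∀ i ∈ s, 0 ≤ f i) (hg : ∀ i ∈ s, 0 ≤ g i) :
    √(∑ i ∈ s, (f i + g i) ^ 2) ≤ √(∑ i ∈ s, f i ^ 2) + √(∑ i ∈ s, g i ^ 2) := by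
  simpa only [Real.rpow_two, ← Real.sqrt_eq_rpow] using
    Real.Lp_add_le_of_nonneg s (p := 2) one_le_two hf hg

lemma setOf_exists_mem_eq {ι β : Type*} (s : Set ι) (f : ι → β) :
    {y | ∃ j ∈ s, y = f j} = f '' s := by
  ext
  simp [eq_comm]

lemma sInf_setOf_le {ι β : Type*} [ConditionallyCompleteLinearOrder β] {s : Set ι}
    (hs : s.Finite) (f : ι → β) {i : ι} (hi : i ∈ s) :
    sInf {y | ∃ j ∈ s, y = f j} ≤ f i := by
  rw [setOf_exists_mem_eq]
  exact csInf_le (hs.image f).bddBelow (Set.mem_image_of_mem f hi)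

lemma exists_sInf_setOf_eq {ι β : Type*} [ConditionallyCompleteLinearOrder β] {s : Set ι}
    (hs : s.Finite) (hne : s.Nonempty) (f : ι → β) :
    ∃ i ∈ s, sInf {y | ∃ j ∈ s, y = f j} = f i := by
  rw [setOf_exists_mem_eq]
  obtain ⟨i, hi, h⟩ := (hne.image f).csInf_mem (hs.image f)
  exact ⟨i, hi, h.symm⟩

section RmsDist

variable {E : Type*} [SeminormedAddCommGroup E]

def rmsDist (k : ℕ) (C : Finset E) (x : E) : ℝ :=
  √((k : ℝ)⁻¹ * ∑ p ∈ C, ‖x - p‖ ^ 2)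

lemma rmsDist_le_norm_sub_add {k : ℕ} {C : Finset E} (hC : C.card = k) (x y : E) :
    rmsDist k C x ≤ ‖x - y‖ + rmsDist k C y := by
  have hconst : √(∑ _p ∈ C, ‖x - y‖ ^ 2) = √k * ‖x - y‖ := by
    rw [sum_const, hC, nsmul_eq_mul, Real.sqrt_mul (Nat.cast_nonneg _),
      Real.sqrt_sq (norm_nonneg _)]
  have hk : √((k : ℝ)⁻¹) * √k ≤ 1 := by
    rw [← Real.sqrt_mul (by positivity)]
    exact Real.sqrt_le_one.mpr (inv_mul_le_one_of_le₀ le_rfl (Nat.cast_nonneg _))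
  calc rmsDist k C x ≤ √((k : ℝ)⁻¹) * √(∑ p ∈ C, (‖x - y‖ + ‖y - p‖) ^ 2) := by
        rw [rmsDist, Real.sqrt_mul (by positivity)]
        gcongr with p
        exact norm_sub_le_norm_sub_add_norm_sub x y p
    _ ≤ √((k : ℝ)⁻¹) * (√k * ‖x - y‖ + √(∑ p ∈ C, ‖y - p‖ ^ 2)) := by
        rw [← hconst]
        gcongr
        exact sqrt_sum_add_sq_le C (fun _ _ => norm_nonneg _) fun _ _ => norm_nonneg _
    _ ≤ ‖x - y‖ + rmsDist k C y := by
        rw [rmsDist, Real.sqrt_mul (by positivity), mul_add, ← mul_assoc]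
        gcongr
        exact mul_le_of_le_one_left (norm_nonneg _) hk

lemma exists_norm_sub_le_rmsDist {k : ℕ} {C : Finset E} (hC : C.card = k) (hk : k ≠ 0)
    (x : E) : ∃ q ∈ C, ‖x - q‖ ≤ rmsDist k C x := by
  have hne : C.Nonempty := card_pos.mp (hC ▸ Nat.pos_of_ne_zero hk)
  obtain ⟨q, hq, hle⟩ := exists_le_of_sum_le hne (f := fun p => ‖x - p‖ ^ 2)
    (g := fun _ => (k : ℝ)⁻¹ * ∑ p ∈ C, ‖x - p‖ ^ 2) (by
      rw [sum_const, hC, nsmul_eq_mul, mul_inv_cancel_left₀ (Nat.cast_ne_zero.mpr hk)])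
  exact ⟨q, hq, Real.le_sqrt_of_sq_le hle⟩

end RmsDist

lemma norm_sub_bary_sq_sub_wt {d k : ℕ} {C : Finset (EuclideanSpace ℝ (Fin d))}
    (hC : C.card = k) (hk : k ≠ 0) (y : EuclideanSpace ℝ (Fin d)) :
    ‖y - bary k C‖ ^ 2 - wt k C = (k : ℝ)⁻¹ * ∑ p ∈ C, ‖y - p‖ ^ 2 := by
  have hk' : (k : ℝ) ≠ 0 := Nat.cast_ne_zero.mpr hk
  set b := bary k C with hb
  have hsum : ∑ p ∈ C, (b - p) = 0 := by
    rw [sum_sub_distrib, sum_const, hC, ← Nat.cast_smul_eq_nsmul ℝ, hb, bary, smul_smul,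
      mul_inv_cancel₀ hk', one_smul, sub_self]
  have hexpand : ∑ p ∈ C, ‖y - p‖ ^ 2 = k * ‖y - b‖ ^ 2 + ∑ p ∈ C, ‖b - p‖ ^ 2 :=
    calc ∑ p ∈ C, ‖y - p‖ ^ 2
        = ∑ p ∈ C, (‖y - b‖ ^ 2 + 2 * inner ℝ (y - b) (b - p) + ‖b - p‖ ^ 2) :=
          sum_congr rfl fun p _ => by rw [← norm_add_sq_real, sub_add_sub_cancel]
      _ = k * ‖y - b‖ ^ 2 + ∑ p ∈ C, ‖b - p‖ ^ 2 := by
          rw [sum_add_distrib, sum_add_distrib, ← mul_sum, ← inner_sum, hsum, inner_zero_right,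
            sum_const, hC, nsmul_eq_mul]
          ring
  rw [hexpand, wt]
  field_simp
  ring

section Witnessed

variable {d k : ℕ} {P C : Finset (EuclideanSpace ℝ (Fin d))}

lemma IsWitnessed.mem_powersetCard (h : IsWitnessed P k C) : C ∈ P.powersetCard k :=
  h.choose_spec.2.1

lemma IsWitnessed.card_eq (h : IsWitnessed P k C) : C.card = k :=
  (Finset.mem_powersetCard.mp h.mem_powersetCard).2

lemma finite_setOf_isWitnessed : {C | IsWitnessed P k C}.Finite :=
  (P.powersetCard k).finite_toSet.subset fun _ h => h.mem_powersetCard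

lemma exists_isWitnessed_rmsDist_le {C' : Finset (EuclideanSpace ℝ (Fin d))}
    (hC' : C' ∈ P.powersetCard k) {q : EuclideanSpace ℝ (Fin d)} (hq : q ∈ C') :
    ∃ C, IsWitnessed P k C ∧ rmsDist k C q ≤ rmsDist k C' q := by
  classical
  obtain ⟨C, hC, hmin⟩ := ((P.powersetCard k).filter (q ∈ ·)).exists_min_image
    (fun C => ∑ p ∈ C, ‖q - p‖ ^ 2) ⟨C', mem_filter.mpr ⟨hC', hq⟩⟩
  have hmin' : ∀ C'' ∈ P.powersetCard k, q ∈ C'' →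
      ∑ p ∈ C, ‖q - p‖ ^ 2 ≤ ∑ p ∈ C'', ‖q - p‖ ^ 2 :=
    fun C'' h₁ h₂ => hmin C'' (mem_filter.mpr ⟨h₁, h₂⟩)
  rw [mem_filter] at hC
  refine ⟨C, ⟨q, (mem_powersetCard.mp hC').1 hq, hC.1, hC.2, hmin'⟩, ?_⟩
  exact Real.sqrt_le_sqrt (mul_le_mul_of_nonneg_left (hmin' C' hC' hq) (by positivity))

lemma kdist_le_rmsDist (hC : C ∈ P.powersetCard k) (x : EuclideanSpace ℝ (Fin d)) :
    kdist P k x ≤ rmsDist k C x :=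
  Real.sqrt_le_sqrt (sInf_setOf_le (P.powersetCard k).finite_toSet _ hC)

lemma exists_kdist_eq_rmsDist (hkP : k ≤ P.card) (x : EuclideanSpace ℝ (Fin d)) :
    ∃ C ∈ P.powersetCard k, kdist P k x = rmsDist k C x := by
  obtain ⟨C, hC, h⟩ := exists_sInf_setOf_eq (P.powersetCard k).finite_toSet
    (by simpa using powersetCard_nonempty.mpr hkP) fun C => (k : ℝ)⁻¹ * ∑ p ∈ C, ‖x - p‖ ^ 2
  exact ⟨C, hC, congrArg Real.sqrt h⟩

lemma wkdist_le_rmsDist (hk : k ≠ 0) (hC : IsWitnessed P k C) (x : EuclideanSpace ℝ (Fin d)) :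
    wkdist P k x ≤ rmsDist k C x := by
  rw [rmsDist, ← norm_sub_bary_sq_sub_wt hC.card_eq hk]
  exact Real.sqrt_le_sqrt (sInf_setOf_le finite_setOf_isWitnessed _ hC)

lemma exists_wkdist_eq_rmsDist (hk : k ≠ 0) (hW : ∃ C, IsWitnessed P k C)
    (x : EuclideanSpace ℝ (Fin d)) : ∃ C, IsWitnessed P k C ∧ wkdist P k x = rmsDist k C x := by
  obtain ⟨C, hC, h⟩ := exists_sInf_setOf_eq finite_setOf_isWitnessed hW
    fun C => ‖x - bary k C‖ ^ 2 - wt k C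
  refine ⟨C, hC, ?_⟩
  rw [rmsDist, ← norm_sub_bary_sq_sub_wt hC.card_eq hk]
  exact congrArg Real.sqrt h

end Witnessed

/-- **General Bound.** For every point `x`,
`d_{P,k}(x) ≤ d^w_{P,k}(x) ≤ (2 + √2) · d_{P,k}(x)`. -/
theorem kdist_le_wkdist_le {d : ℕ} (N k : ℕ)
    (P : Finset (EuclideanSpace ℝ (Fin d))) (hPN : P.card = N)
    (hk : 1 ≤ k) (hkN : k ≤ N) (x : EuclideanSpace ℝ (Fin d)) :
    kdist P k x ≤ wkdist P k x ∧ wkdist P k x ≤ (2 + Real.sqrt 2) * kdist P k x := by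
  have hk0 : k ≠ 0 := Nat.one_le_iff_ne_zero.mp hk
  obtain ⟨Cmin, hCmin, hkdist⟩ := exists_kdist_eq_rmsDist (hPN ▸ hkN) x
  have hCmin_card := (mem_powersetCard.mp hCmin).2
  obtain ⟨q, hqCmin, hxq⟩ := exists_norm_sub_le_rmsDist hCmin_card hk0 x
  obtain ⟨C, hC, hCq⟩ := exists_isWitnessed_rmsDist_le hCmin hqCmin
  obtain ⟨Cw, hCw, hwkdist⟩ := exists_wkdist_eq_rmsDist hk0 ⟨C, hC⟩ x
  refine ⟨(kdist_le_rmsDist hCw.mem_powersetCard x).trans hwkdist.ge, ?_⟩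
  calc wkdist P k x ≤ rmsDist k C x := wkdist_le_rmsDist hk0 hC x
    _ ≤ ‖x - q‖ + rmsDist k C q :=
        rmsDist_le_norm_sub_add hC.card_eq x q
    _ ≤ ‖x - q‖ + (‖q - x‖ + rmsDist k Cmin x) := by
        gcongr
        exact hCq.trans (rmsDist_le_norm_sub_add hCmin_card q x)
    _ ≤ 3 * kdist P k x := by rw [norm_sub_rev q x, hkdist]; linarith
    _ ≤ (2 + Real.sqrt 2) * kdist P k x := by
        gcongr
        · exact Real.sqrt_nonneg _
        · linarith [Real.one_lt_sqrt_two]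

end
end

section
/- Let μ be a probability measure on ℝ^d with compact support K, of dimension at most ℓ with constant α > 0. Let P ⊆ ℝ^d be a finite set of N points, let 1 ≤ k ≤ N be an integer and set m₀ = k/N. Then sup_{x ∈ ℝ^d} |d_{P,k}(x) − d_K(x)| ≤ m₀^{−1/2} · W₂(μ, U_P) + α^{−1/ℓ} · m₀^{1/ℓ}. -/
open MeasureTheory Metric Finset
open scoped ENNReal NNReal

noncomputable section

/-- The support of a measure: the set of points all of whose open neighborhoods have
positive measure (the smallest closed set whose complement has zero measure). -/
def msupp {d : ℕ} (μ : Measure (EuclideanSpace ℝ (Fin d))) : Set (EuclideanSpace ℝ (Fin d)) :=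
  { x | ∀ U : Set (EuclideanSpace ℝ (Fin d)), IsOpen U → x ∈ U → 0 < μ U }

/-- `μ` has dimension at most `ℓ` with constant `α`: `μ(B̄(p,r)) ≥ α rℓ` for every `p` in
the support of `μ` and every `0 < r < diam (supp μ)`. -/
def HasDimLE {d : ℕ} (μ : Measure (EuclideanSpace ℝ (Fin d))) (ℓ α : ℝ) : Prop :=
  ∀ p ∈ msupp μ, ∀ r : ℝ, 0 < r → ENNReal.ofReal r < EMetric.diam (msupp μ) →
    ENNReal.ofReal (α * r ^ ℓ) ≤ μ (Metric.closedBall p r)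

/-- The 2-Wasserstein distance between two measures, as the infimum over transport plans
(couplings) of the square root of the transport cost `∫ ‖x - y‖² dπ(x,y)`. -/
def W2 {d : ℕ} (μ ν : Measure (EuclideanSpace ℝ (Fin d))) : ℝ≥0∞ :=
  ⨅ (π : Measure (EuclideanSpace ℝ (Fin d) × EuclideanSpace ℝ (Fin d)))
    (_ : π.map Prod.fst = μ) (_ : π.map Prod.snd = ν),
      (∫⁻ p, edist p.1 p.2 ^ 2 ∂π) ^ (1/2 : ℝ)

/-- The uniform probability measure on a finite point set. -/
def unif {d : ℕ} (P : Finset (EuclideanSpace ℝ (Fin d))) : Measure (EuclideanSpace ℝ (Fin d)) :=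
  (P.card : ℝ≥0∞)⁻¹ • ∑ p ∈ P, Measure.dirac p

/-!
Fix a coupling `π` of `μ` and `U_P` with cost `c = ∫ ‖z₁ - z₂‖² dπ` and put `m = k / N`.

For `d_K ≤ d_{P,k} + …`: the `k` points realizing `d_{P,k}(x)` carry `U_P`-mass `m`. On the pairs
of `π` landing on them, `d_K(x) ≤ ‖x - z₂‖ + ‖z₁ - z₂‖` because `z₁ ∈ K`, so Minkowski's
inequality in `L²(π)` gives `√m d_K(x) ≤ √m d_{P,k}(x) + √c`.

For `d_{P,k} ≤ d_K + …`: let `y ∈ K` be closest to `x` and `r = (m / α)^{1/ℓ}`, so that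
`μ(B(y, r)) ≥ m` by the dimension bound. Transporting the part of `μ` on `B(y, r)`, rescaled to
mass `m`, yields a submeasure of `U_P` of mass `m`; its mean squared distance to `x` is at least
`d_{P,k}(x)²`, since the `k` nearest points minimize it, while `‖x - z₂‖ ≤ d_K(x) + r + ‖z₁ - z₂‖`
on it. Minkowski again gives `√m d_{P,k}(x) ≤ √m (d_K(x) + r) + √c`.

Dividing by `√m` and taking the infimum over `π` turns `√c` into `W₂(μ, U_P)`.
-/

namespace Finset

variable {X : Type*} [DecidableEq X]

theorem exists_subset_card_eq_forall_le_of_mem_sdiff {β : Type*} [LinearOrder β] (v : X → β)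
    (s : Finset X) {k : ℕ} (hk : k ≤ s.card) :
    ∃ C ⊆ s, C.card = k ∧ ∀ p ∈ C, ∀ q ∈ s \ C, v p ≤ v q := by
  induction k with
  | zero => exact ⟨∅, empty_subset _, rfl, by simp⟩
  | succ n ih =>
    obtain ⟨C, hCs, hCcard, hC⟩ := ih (Nat.le_of_succ_le hk)
    have hne : (s \ C).Nonempty := by
      rw [← card_pos, card_sdiff_of_subset hCs]; omega
    obtain ⟨m, hm, hmin⟩ := exists_min_image (s \ C) v hne
    obtain ⟨hms, hmC⟩ := mem_sdiff.1 hm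
    refine ⟨insert m C, insert_subset hms hCs, by rw [card_insert_of_notMem hmC, hCcard], ?_⟩
    intro p hp q hq
    have hqC : q ∈ s \ C := sdiff_subset_sdiff le_rfl (subset_insert m C) hq
    rcases mem_insert.1 hp with rfl | hpC
    · exact hmin q hqC
    · exact hC p hpC q hqC

/-- The deficit `∑ p ∈ C, (u - w p)` is carried by `s \ C`, where `v` is larger. -/
theorem mul_sum_le_sum_mul_of_le_sdiff {s C : Finset X} (hCs : C ⊆ s) {v w : X → ℝ≥0∞}
    {u : ℝ≥0∞} (hu : u ≠ ⊤) (hw : ∀ p ∈ s, w p ≤ u) (hsum : ∑ p ∈ s, w p = C.card * u)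
    (hC : ∀ p ∈ C, ∀ q ∈ s \ C, v p ≤ v q) :
    u * ∑ p ∈ C, v p ≤ ∑ p ∈ s, v p * w p := by
  have hwC : ∀ p ∈ C, w p ≤ u := fun p hp => hw p (hCs hp)
  set t := C.sup v
  have hvt : ∀ p ∈ C, v p ≤ t := fun p hp => le_sup hp
  have htv : ∀ q ∈ s \ C, t ≤ v q := fun q hq => Finset.sup_le fun p hp => hC p hp q hq
  have hCfin : ∑ p ∈ C, w p ≠ ⊤ :=
    ne_top_of_le_ne_top (by simpa using ENNReal.mul_ne_top (by simp) hu) (sum_le_sum hwC)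
  have hdeficit : ∑ p ∈ C, (u - w p) = ∑ q ∈ s \ C, w q := by
    refine (ENNReal.add_left_inj hCfin).1 ?_
    rw [← sum_add_distrib, sum_sdiff hCs, hsum,
      sum_congr rfl fun p hp => tsub_add_cancel_of_le (hwC p hp)]
    simp
  calc u * ∑ p ∈ C, v p
      = ∑ p ∈ C, v p * w p + ∑ p ∈ C, (u - w p) * v p := by
        rw [mul_sum, ← sum_add_distrib]
        refine sum_congr rfl fun p hp => ?_
        rw [mul_comm (v p), ← add_mul, add_tsub_cancel_of_le (hwC p hp)]
    _ ≤ ∑ p ∈ C, v p * w p + (∑ p ∈ C, (u - w p)) * t := by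
        rw [sum_mul]; gcongr with p hp; exact hvt p hp
    _ ≤ ∑ p ∈ C, v p * w p + ∑ q ∈ s \ C, v q * w q := by
        rw [hdeficit, sum_mul]
        gcongr ∑ p ∈ C, v p * w p + ?_
        refine sum_le_sum fun q hq => ?_
        rw [mul_comm (v q)]
        gcongr; exact htv q hq
    _ = ∑ p ∈ s, v p * w p := by rw [add_comm, sum_sdiff hCs]

theorem exists_card_eq_mul_sum_le_sum_mul {s : Finset X} {k : ℕ} (hk : k ≤ s.card)
    (v w : X → ℝ≥0∞) {u : ℝ≥0∞} (hu : u ≠ ⊤) (hw : ∀ p ∈ s, w p ≤ u)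
    (hsum : ∑ p ∈ s, w p = k * u) :
    ∃ C ∈ s.powersetCard k, u * ∑ p ∈ C, v p ≤ ∑ p ∈ s, v p * w p := by
  obtain ⟨C, hCs, hCcard, hC⟩ := exists_subset_card_eq_forall_le_of_mem_sdiff v s hk
  exact ⟨C, mem_powersetCard.2 ⟨hCs, hCcard⟩,
    mul_sum_le_sum_mul_of_le_sdiff hCs hu hw (hCcard ▸ hsum) hC⟩

end Finset

theorem ENNReal.sq_rpow_half (a : ℝ≥0∞) : (a ^ 2) ^ (1/2 : ℝ) = a := by
  rw [← ENNReal.rpow_natCast, ← ENNReal.rpow_mul]; norm_num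

theorem ENNReal.mul_sq_rpow_half (a b : ℝ≥0∞) : (a * b ^ 2) ^ (1/2 : ℝ) = a ^ (1/2 : ℝ) * b := by
  rw [ENNReal.mul_rpow_of_nonneg _ _ (by norm_num), ENNReal.sq_rpow_half]

theorem ENNReal.ofReal_natCast_div_natCast (k : ℕ) {N : ℕ} (hN : 0 < N) :
    ENNReal.ofReal ((k : ℝ) / N) = k / N := by
  rw [ENNReal.ofReal_div_of_pos (by positivity), ENNReal.ofReal_natCast, ENNReal.ofReal_natCast]

theorem ENNReal.le_add_of_ofReal_le_ofReal_add {a b t : ℝ} (hb : 0 ≤ b) (ht : 0 ≤ t)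
    (h : ENNReal.ofReal a ≤ ENNReal.ofReal b + ENNReal.ofReal t) : a ≤ b + t := by
  rwa [← ENNReal.ofReal_add hb ht, ENNReal.ofReal_le_ofReal_iff (by positivity)] at h

section Minkowski

variable {α : Type*} [MeasurableSpace α] {ν : Measure α}

theorem rpow_half_lintegral_sq_le_add {f g h : α → ℝ≥0∞} (hg : AEMeasurable g ν)
    (hh : AEMeasurable h ν) (hfgh : ∀ᵐ a ∂ν, f a ≤ g a + h a) :
    (∫⁻ a, f a ^ 2 ∂ν) ^ (1/2 : ℝ) ≤
      (∫⁻ a, g a ^ 2 ∂ν) ^ (1/2 : ℝ) + (∫⁻ a, h a ^ 2 ∂ν) ^ (1/2 : ℝ) := by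
  calc (∫⁻ a, f a ^ 2 ∂ν) ^ (1/2 : ℝ)
      ≤ (∫⁻ a, (g a + h a) ^ 2 ∂ν) ^ (1/2 : ℝ) := by
        gcongr ?_ ^ _
        exact lintegral_mono_ae (hfgh.mono fun a ha => by gcongr)
    _ ≤ _ := by simpa using ENNReal.lintegral_Lp_add_le hg hh one_le_two

theorem rpow_half_lintegral_const_sq (a : ℝ≥0∞) :
    (∫⁻ _, a ^ 2 ∂ν) ^ (1/2 : ℝ) = ν Set.univ ^ (1/2 : ℝ) * a := by
  rw [lintegral_const, mul_comm, ENNReal.mul_sq_rpow_half]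

end Minkowski

section Transport

variable {X : Type*} [PseudoEMetricSpace X] [MeasurableSpace X]

def transportCost (π : Measure (X × X)) : ℝ≥0∞ := ∫⁻ z, edist z.1 z.2 ^ 2 ∂π

variable {π ρ : Measure (X × X)}

theorem transportCost_mono (h : ρ ≤ π) : transportCost ρ ≤ transportCost π :=
  lintegral_mono' h le_rfl

variable [OpensMeasurableSpace X] [SecondCountableTopology X]

theorem lintegral_edist_sq_map_snd (ρ : Measure (X × X)) (x : X) :
    ∫⁻ y, edist x y ^ 2 ∂ρ.map Prod.snd = ∫⁻ z, edist x z.2 ^ 2 ∂ρ :=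
  lintegral_map ((measurable_const.edist measurable_id).pow_const 2) measurable_snd

theorem rpow_half_mul_le_of_ae_le_edist_add (hρ : ρ ≤ π) {x : X} {a : ℝ≥0∞}
    (h : ∀ᵐ z ∂ρ, a ≤ edist x z.2 + edist z.1 z.2) :
    ρ Set.univ ^ (1/2 : ℝ) * a ≤
      (∫⁻ y, edist x y ^ 2 ∂ρ.map Prod.snd) ^ (1/2 : ℝ) + transportCost π ^ (1/2 : ℝ) := by
  rw [← rpow_half_lintegral_const_sq, lintegral_edist_sq_map_snd]
  calc (∫⁻ _, a ^ 2 ∂ρ) ^ (1/2 : ℝ)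
      ≤ (∫⁻ z, edist x z.2 ^ 2 ∂ρ) ^ (1/2 : ℝ) + transportCost ρ ^ (1/2 : ℝ) :=
        rpow_half_lintegral_sq_le_add (measurable_const.edist measurable_snd).aemeasurable
          (measurable_fst.edist measurable_snd).aemeasurable h
    _ ≤ _ := by gcongr; exact transportCost_mono hρ

theorem rpow_half_lintegral_le_of_ae_edist_le_add (hρ : ρ ≤ π) {x : X} {a : ℝ≥0∞}
    (h : ∀ᵐ z ∂ρ, edist x z.2 ≤ a + edist z.1 z.2) :
    (∫⁻ y, edist x y ^ 2 ∂ρ.map Prod.snd) ^ (1/2 : ℝ) ≤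
      ρ Set.univ ^ (1/2 : ℝ) * a + transportCost π ^ (1/2 : ℝ) := by
  rw [← rpow_half_lintegral_const_sq, lintegral_edist_sq_map_snd]
  calc (∫⁻ z, edist x z.2 ^ 2 ∂ρ) ^ (1/2 : ℝ)
      ≤ (∫⁻ _, a ^ 2 ∂ρ) ^ (1/2 : ℝ) + transportCost ρ ^ (1/2 : ℝ) :=
        rpow_half_lintegral_sq_le_add aemeasurable_const
          (measurable_fst.edist measurable_snd).aemeasurable h
    _ ≤ _ := by gcongr; exact transportCost_mono hρ

end Transport

section Euclidean

variable {d : ℕ}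

local notation "E" => EuclideanSpace ℝ (Fin d)

theorem W2_eq_iInf_transportCost (μ ν : Measure E) :
    W2 μ ν = ⨅ (π : Measure (E × E)) (_ : π.map Prod.fst = μ) (_ : π.map Prod.snd = ν),
      transportCost π ^ (1/2 : ℝ) := rfl

theorem msupp_eq_support (μ : Measure E) : msupp μ = μ.support := by
  ext x
  simp only [msupp, Measure.support_eq_forall_isOpen, Set.mem_ofPred_eq]
  exact forall_congr' fun U => forall_comm

theorem ae_mem_msupp (μ : Measure E) : ∀ᵐ x ∂μ, x ∈ msupp μ :=
  msupp_eq_support μ ▸ Measure.support_mem_ae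

theorem HasDimLE.ofReal_min_le_measure_closedBall {μ : Measure E} [IsProbabilityMeasure μ]
    {ℓ α : ℝ} (hdim : HasDimLE μ ℓ α) {p : E} (hp : p ∈ msupp μ) {r : ℝ} (hr : 0 < r) :
    ENNReal.ofReal (min (α * r ^ ℓ) 1) ≤ μ (closedBall p r) := by
  by_cases hlt : ENNReal.ofReal r < ediam (msupp μ)
  · exact (ENNReal.ofReal_le_ofReal (min_le_left _ _)).trans (hdim p hp r hr hlt)
  · have hsub : msupp μ ⊆ closedBall p r := fun z hz =>
      mem_closedBall.2 <| (edist_le_ofReal hr.le).1 <|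
        (edist_le_ediam_of_mem hz hp).trans (not_lt.1 hlt)
    have hball : μ (closedBall p r) = 1 :=
      (prob_compl_eq_zero_iff measurableSet_closedBall).1 <|
        ae_iff.1 ((ae_mem_msupp μ).mono fun z hz => hsub hz)
    rw [hball]
    exact ENNReal.ofReal_le_one.2 (min_le_right _ _)

theorem lintegral_unif (P : Finset E) (f : E → ℝ≥0∞) :
    ∫⁻ y, f y ∂unif P = (P.card : ℝ≥0∞)⁻¹ * ∑ p ∈ P, f p := by
  simp [unif]

theorem setLIntegral_unif_coe {P C : Finset E} (hCP : C ⊆ P) (f : E → ℝ≥0∞) :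
    ∫⁻ y in C, f y ∂unif P = (P.card : ℝ≥0∞)⁻¹ * ∑ p ∈ C, f p := by
  rw [← lintegral_indicator C.measurableSet, lintegral_unif, sum_indicator_subset _ hCP]

theorem unif_coe {P C : Finset E} (hCP : C ⊆ P) : unif P C = C.card / P.card := by
  rw [← setLIntegral_one, setLIntegral_unif_coe hCP]
  simp [ENNReal.div_eq_inv_mul]

theorem ae_unif_mem (P : Finset E) : ∀ᵐ y ∂unif P, y ∈ P := by
  simp [ae_iff, unif]

theorem isProbabilityMeasure_unif {P : Finset E} (hP : P.Nonempty) :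
    IsProbabilityMeasure (unif P) := by
  constructor
  rw [← lintegral_one, lintegral_unif, sum_const, nsmul_one]
  exact ENNReal.inv_mul_cancel (by simpa using hP.ne_empty) (by simp)

theorem kdist_sq (P : Finset E) (k : ℕ) (x : E) :
    kdist P k x ^ 2 =
      sInf { y : ℝ | ∃ C ∈ P.powersetCard k, y = (k : ℝ)⁻¹ * ∑ p ∈ C, ‖x - p‖ ^ 2 } :=
  Real.sq_sqrt <| Real.sInf_nonneg <| by rintro _ ⟨C, -, rfl⟩; positivity

theorem kdist_sq_le (P : Finset E) {k : ℕ} (x : E) {C : Finset E} (hC : C ∈ P.powersetCard k) :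
    kdist P k x ^ 2 ≤ (k : ℝ)⁻¹ * ∑ p ∈ C, ‖x - p‖ ^ 2 := by
  rw [kdist_sq]
  exact csInf_le ⟨0, by rintro _ ⟨C, -, rfl⟩; positivity⟩ ⟨C, hC, rfl⟩

theorem exists_kdist_sq_eq (P : Finset E) {k : ℕ} (hk : k ≤ P.card) (x : E) :
    ∃ C ∈ P.powersetCard k, kdist P k x ^ 2 = (k : ℝ)⁻¹ * ∑ p ∈ C, ‖x - p‖ ^ 2 := by
  rw [kdist_sq]
  set S := { y : ℝ | ∃ C ∈ P.powersetCard k, y = (k : ℝ)⁻¹ * ∑ p ∈ C, ‖x - p‖ ^ 2 }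
  suffices sInf S ∈ S from this
  refine Set.Nonempty.csInf_mem ?_ ?_
  · obtain ⟨C, hCP, hCk⟩ := exists_subset_card_eq hk
    exact ⟨_, C, mem_powersetCard.2 ⟨hCP, hCk⟩, rfl⟩
  · refine ((P.powersetCard k).finite_toSet.image
      fun C => (k : ℝ)⁻¹ * ∑ p ∈ C, ‖x - p‖ ^ 2).subset ?_
    rintro _ ⟨C, hC, rfl⟩
    exact ⟨C, hC, rfl⟩

theorem ofReal_inv_mul_sum_norm_sub_sq {k : ℕ} (hk : k ≠ 0) (x : E) (C : Finset E) :
    ENNReal.ofReal ((k : ℝ)⁻¹ * ∑ p ∈ C, ‖x - p‖ ^ 2) = (k : ℝ≥0∞)⁻¹ * ∑ p ∈ C, edist x p ^ 2 := by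
  rw [ENNReal.ofReal_mul (by positivity), ENNReal.ofReal_inv_of_pos (by positivity),
    ENNReal.ofReal_natCast, ENNReal.ofReal_sum_of_nonneg fun p _ => by positivity]
  simp_rw [edist_dist, dist_eq_norm, ENNReal.ofReal_pow (norm_nonneg _)]

theorem kdist_nonneg (P : Finset E) (k : ℕ) (x : E) : 0 ≤ kdist P k x := Real.sqrt_nonneg _

theorem ofReal_kdist_sq_le {P : Finset E} {k : ℕ} (hk : k ≠ 0) (x : E) {C : Finset E}
    (hC : C ∈ P.powersetCard k) :
    ENNReal.ofReal (kdist P k x) ^ 2 ≤ (k : ℝ≥0∞)⁻¹ * ∑ p ∈ C, edist x p ^ 2 := by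
  rw [← ENNReal.ofReal_pow (kdist_nonneg P k x), ← ofReal_inv_mul_sum_norm_sub_sq hk]
  exact ENNReal.ofReal_le_ofReal (kdist_sq_le P x hC)

theorem exists_ofReal_kdist_sq_eq {P : Finset E} {k : ℕ} (hk : k ≠ 0) (hkP : k ≤ P.card)
    (x : E) : ∃ C ∈ P.powersetCard k,
      ENNReal.ofReal (kdist P k x) ^ 2 = (k : ℝ≥0∞)⁻¹ * ∑ p ∈ C, edist x p ^ 2 := by
  obtain ⟨C, hC, hCeq⟩ := exists_kdist_sq_eq P hkP x
  refine ⟨C, hC, ?_⟩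
  rw [← ENNReal.ofReal_pow (kdist_nonneg P k x), hCeq, ofReal_inv_mul_sum_norm_sub_sq hk]

theorem ENNReal.natCast_div_mul_inv_mul {k : ℕ} (hk : k ≠ 0) (N : ℕ) (a : ℝ≥0∞) :
    (k / N : ℝ≥0∞) * ((k : ℝ≥0∞)⁻¹ * a) = (N : ℝ≥0∞)⁻¹ * a := by
  rw [ENNReal.div_eq_inv_mul, mul_assoc, ← mul_assoc (k : ℝ≥0∞),
    ENNReal.mul_inv_cancel (by simpa using hk) (by simp), one_mul]

theorem lintegral_eq_sum_of_le_unif {P : Finset E} {ν : Measure E} (hν : ν ≤ unif P)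
    (f : E → ℝ≥0∞) : ∫⁻ y, f y ∂ν = ∑ p ∈ P, f p * ν {p} := by
  rw [← lintegral_finset, Measure.restrict_eq_self_of_ae_mem
    ((Measure.absolutelyContinuous_of_le hν).ae_le (ae_unif_mem P))]

theorem mul_ofReal_kdist_sq_le_lintegral {P : Finset E} {k : ℕ} (hk : k ≠ 0)
    (hkP : k ≤ P.card) {ν : Measure E} (hν : ν ≤ unif P) (hνuniv : ν Set.univ = k / P.card)
    (x : E) : k / P.card * ENNReal.ofReal (kdist P k x) ^ 2 ≤ ∫⁻ y, edist x y ^ 2 ∂ν := by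
  have hP : (P.card : ℝ≥0∞) ≠ 0 := by simp only [ne_eq, Nat.cast_eq_zero]; omega
  have hatom : ∀ p ∈ P, ν {p} ≤ (P.card : ℝ≥0∞)⁻¹ := fun p hp =>
    calc ν {p} ≤ unif P {p} := hν _
      _ = _ := by
        rw [← coe_singleton, unif_coe (singleton_subset_iff.2 hp), card_singleton,
          Nat.cast_one, one_div]
  have hmass : ∑ p ∈ P, ν {p} = k * (P.card : ℝ≥0∞)⁻¹ := by
    have := lintegral_eq_sum_of_le_unif hν fun _ => 1
    rw [lintegral_one, hνuniv] at this
    simpa [div_eq_mul_inv] using this.symm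
  obtain ⟨C, hC, hCle⟩ := exists_card_eq_mul_sum_le_sum_mul hkP (fun p => edist x p ^ 2)
    (fun p => ν {p}) (ENNReal.inv_ne_top.2 hP) hatom hmass
  rw [lintegral_eq_sum_of_le_unif hν]
  calc k / P.card * ENNReal.ofReal (kdist P k x) ^ 2
      ≤ k / P.card * ((k : ℝ≥0∞)⁻¹ * ∑ p ∈ C, edist x p ^ 2) := by
        gcongr; exact ofReal_kdist_sq_le hk x hC
    _ = (P.card : ℝ≥0∞)⁻¹ * ∑ p ∈ C, edist x p ^ 2 := ENNReal.natCast_div_mul_inv_mul hk _ _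
    _ ≤ _ := hCle

section Coupling

variable {μ : Measure (EuclideanSpace ℝ (Fin d))} {P : Finset (EuclideanSpace ℝ (Fin d))}
  {π : Measure (EuclideanSpace ℝ (Fin d) × EuclideanSpace ℝ (Fin d))} {k : ℕ}

theorem rpow_half_mul_infDist_le (hfst : π.map Prod.fst = μ) (hsnd : π.map Prod.snd = unif P)
    {K : Set E} (hμK : ∀ᵐ y ∂μ, y ∈ K) (hk : k ≠ 0) (hkP : k ≤ P.card) (x : E) :
    (k / P.card : ℝ≥0∞) ^ (1/2 : ℝ) * ENNReal.ofReal (infDist x K) ≤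
      (k / P.card : ℝ≥0∞) ^ (1/2 : ℝ) * ENNReal.ofReal (kdist P k x) +
        transportCost π ^ (1/2 : ℝ) := by
  obtain ⟨C, hC, hCeq⟩ := exists_ofReal_kdist_sq_eq hk hkP x
  obtain ⟨hCP, hCk⟩ := mem_powersetCard.1 hC
  set ρ := π.restrict (Prod.snd ⁻¹' C)
  have hρmap : ρ.map Prod.snd = (unif P).restrict C := by
    rw [← hsnd, Measure.restrict_map measurable_snd C.measurableSet]
  have hρuniv : ρ Set.univ = k / P.card := by
    rw [← Set.preimage_univ (f := Prod.snd), ← Measure.map_apply measurable_snd .univ, hρmap,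
      Measure.restrict_apply_univ, unif_coe hCP, hCk]
  have hint : ∫⁻ y, edist x y ^ 2 ∂ρ.map Prod.snd =
      k / P.card * ENNReal.ofReal (kdist P k x) ^ 2 := by
    rw [hρmap, setLIntegral_unif_coe hCP, hCeq, ENNReal.natCast_div_mul_inv_mul hk]
  have htriangle : ∀ᵐ z ∂ρ, ENNReal.ofReal (infDist x K) ≤ edist x z.2 + edist z.1 z.2 := by
    filter_upwards [ae_restrict_of_ae (ae_of_ae_map measurable_fst.aemeasurable
      (by rwa [hfst]))] with z hz
    calc ENNReal.ofReal (infDist x K) ≤ edist x z.1 := by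
          rw [edist_dist]; exact ENNReal.ofReal_le_ofReal (infDist_le_dist_of_mem hz)
      _ ≤ edist x z.2 + edist z.2 z.1 := edist_triangle _ _ _
      _ = _ := by rw [edist_comm z.2]
  have := rpow_half_mul_le_of_ae_le_edist_add Measure.restrict_le_self htriangle
  rwa [hρuniv, hint, ENNReal.mul_sq_rpow_half] at this

theorem rpow_half_mul_kdist_le [IsFiniteMeasure μ] (hfst : π.map Prod.fst = μ)
    (hsnd : π.map Prod.snd = unif P) (hk : k ≠ 0) (hkP : k ≤ P.card) (x y : E) {r : ℝ}
    (hball : (k / P.card : ℝ≥0∞) ≤ μ (closedBall y r)) :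
    (k / P.card : ℝ≥0∞) ^ (1/2 : ℝ) * ENNReal.ofReal (kdist P k x) ≤
      (k / P.card : ℝ≥0∞) ^ (1/2 : ℝ) * ENNReal.ofReal (dist x y + r) +
        transportCost π ^ (1/2 : ℝ) := by
  set m : ℝ≥0∞ := k / P.card
  set M := μ (closedBall y r)
  set F := Prod.fst ⁻¹' closedBall y r
  have hM0 : M ≠ 0 := ((ENNReal.div_pos (by simpa using hk) (by simp)).trans_le hball).ne'
  have hπF : π F = M := by
    rw [← Measure.map_apply measurable_fst measurableSet_closedBall, hfst]
  set ρ := (m / M) • π.restrict F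
  have hρ : ρ ≤ π := Measure.le_iff'.2 fun s =>
    calc ρ s ≤ 1 * π s :=
          mul_le_mul' (ENNReal.div_le_of_le_mul (by rwa [one_mul])) (Measure.restrict_apply_le _ _)
      _ = π s := one_mul _
  have hρuniv : ρ Set.univ = m := by
    rw [Measure.smul_apply, Measure.restrict_apply_univ, hπF, smul_eq_mul,
      ENNReal.div_mul_cancel hM0 (measure_ne_top _ _)]
  have hνuniv : ρ.map Prod.snd Set.univ = m := by
    rw [Measure.map_apply measurable_snd .univ, Set.preimage_univ, hρuniv]
  have htriangle : ∀ᵐ z ∂ρ, edist x z.2 ≤ ENNReal.ofReal (dist x y + r) + edist z.1 z.2 := by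
    filter_upwards [Measure.ae_smul_measure
      (ae_restrict_mem (measurable_fst measurableSet_closedBall)) _] with z hz
    have hxz : dist x z.1 ≤ dist x y + r :=
      (dist_triangle x y z.1).trans (by gcongr; rw [dist_comm]; exact hz)
    calc edist x z.2 ≤ edist x z.1 + edist z.1 z.2 := edist_triangle _ _ _
      _ ≤ _ := by gcongr; rw [edist_dist]; exact ENNReal.ofReal_le_ofReal hxz
  have := rpow_half_lintegral_le_of_ae_edist_le_add hρ htriangle
  rw [hρuniv] at this
  calc m ^ (1/2 : ℝ) * ENNReal.ofReal (kdist P k x)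
      = (m * ENNReal.ofReal (kdist P k x) ^ 2) ^ (1/2 : ℝ) :=
        (ENNReal.mul_sq_rpow_half _ _).symm
    _ ≤ (∫⁻ y, edist x y ^ 2 ∂ρ.map Prod.snd) ^ (1/2 : ℝ) := by
        gcongr
        exact mul_ofReal_kdist_sq_le_lintegral hk hkP
          (hsnd ▸ Measure.map_mono hρ measurable_snd) hνuniv x
    _ ≤ _ := this

end Coupling

theorem le_add_rpow_mul_W2_of_forall_coupling {μ ν : Measure E} {m a b : ℝ≥0∞} (hm0 : m ≠ 0)
    (hm : m ≠ ⊤)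
    (h : ∀ π : Measure (E × E), π.map Prod.fst = μ → π.map Prod.snd = ν →
      m ^ (1/2 : ℝ) * a ≤ m ^ (1/2 : ℝ) * b + transportCost π ^ (1/2 : ℝ)) :
    a ≤ b + m ^ (-(1 : ℝ)/2) * W2 μ ν := by
  have hs0 : m ^ (1/2 : ℝ) ≠ 0 := (ENNReal.rpow_pos (pos_iff_ne_zero.2 hm0) hm).ne'
  have hstop : m ^ (1/2 : ℝ) ≠ ⊤ := ENNReal.rpow_ne_top_of_nonneg (by norm_num) hm
  rw [neg_div, ENNReal.rpow_neg, W2_eq_iInf_transportCost]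
  simp only [ENNReal.mul_iInf_of_ne (ENNReal.inv_ne_zero.2 hstop) (ENNReal.inv_ne_top.2 hs0),
    ENNReal.add_iInf, le_iInf_iff]
  intro π hfst hsnd
  rw [← ENNReal.mul_le_mul_iff_right hs0 hstop, mul_add, ← mul_assoc,
    ENNReal.mul_inv_cancel hs0 hstop, one_mul]
  exact h π hfst hsnd

theorem W2_ne_top {μ ν : Measure E} [IsProbabilityMeasure μ] [IsProbabilityMeasure ν]
    {s : Set E} (hs : Bornology.IsBounded s) (hμ : ∀ᵐ y ∂μ, y ∈ s) (hν : ∀ᵐ y ∂ν, y ∈ s) :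
    W2 μ ν ≠ ⊤ := by
  have hfst : (μ.prod ν).map Prod.fst = μ := by rw [Measure.map_fst_prod, measure_univ, one_smul]
  have hsnd : (μ.prod ν).map Prod.snd = ν := by rw [Measure.map_snd_prod, measure_univ, one_smul]
  have hcost : transportCost (μ.prod ν) ≤ ediam s ^ 2 := by
    calc transportCost (μ.prod ν) ≤ ∫⁻ _, ediam s ^ 2 ∂(μ.prod ν) := by
          refine lintegral_mono_ae ?_
          filter_upwards [ae_of_ae_map measurable_fst.aemeasurable (by rwa [hfst]),
            ae_of_ae_map measurable_snd.aemeasurable (by rwa [hsnd])] with z h1 h2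
          gcongr
          exact edist_le_ediam_of_mem h1 h2
      _ = ediam s ^ 2 := by simp
  have hW : W2 μ ν ≤ transportCost (μ.prod ν) ^ (1/2 : ℝ) := by
    rw [W2_eq_iInf_transportCost]
    exact (iInf_le _ (μ.prod ν)).trans ((iInf_le _ hfst).trans (iInf_le _ hsnd))
  exact ne_top_of_le_ne_top (ENNReal.rpow_ne_top_of_nonneg (by norm_num)
    (ne_top_of_le_ne_top (ENNReal.pow_ne_top hs.ediam_ne_top) hcost)) hW

theorem abs_kdist_sub_infDist_le {μ : Measure E} [IsProbabilityMeasure μ] {K : Set E}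
    (hKb : Bornology.IsBounded K) (hμK : ∀ᵐ y ∂μ, y ∈ K) {P : Finset E} {k : ℕ} (hk : k ≠ 0)
    (hkP : k ≤ P.card) {x y : E} (hxy : infDist x K = dist x y) {r : ℝ} (hr : 0 ≤ r)
    (hball : (k / P.card : ℝ≥0∞) ≤ μ (closedBall y r)) :
    |kdist P k x - infDist x K| ≤
      ((k : ℝ) / P.card) ^ (-(1 : ℝ)/2) * (W2 μ (unif P)).toReal + r := by
  have hN : 0 < P.card := by omega
  have hm₀ : 0 < (k : ℝ) / P.card := by positivity
  have hm := ENNReal.ofReal_natCast_div_natCast k hN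
  have hW : W2 μ (unif P) ≠ ⊤ := by
    have := isProbabilityMeasure_unif (card_pos.1 hN)
    exact W2_ne_top (hKb.union P.finite_toSet.isBounded) (hμK.mono fun _ h => Or.inl h)
      ((ae_unif_mem P).mono fun _ h => Or.inr h)
  set T := ((k : ℝ) / P.card) ^ (-(1 : ℝ)/2) * (W2 μ (unif P)).toReal
  have hT0 : 0 ≤ T := by positivity
  have hT : (k / P.card : ℝ≥0∞) ^ (-(1 : ℝ)/2) * W2 μ (unif P) = ENNReal.ofReal T := by
    rw [ENNReal.ofReal_mul (by positivity), ENNReal.ofReal_toReal hW,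
      ← ENNReal.ofReal_rpow_of_pos hm₀, hm]
  have hm0 : (k / P.card : ℝ≥0∞) ≠ 0 := hm ▸ (ENNReal.ofReal_pos.2 hm₀).ne'
  have hmtop : (k / P.card : ℝ≥0∞) ≠ ⊤ := hm ▸ ENNReal.ofReal_ne_top
  have hlower := le_add_rpow_mul_W2_of_forall_coupling hm0 hmtop
    fun _ hfst hsnd => rpow_half_mul_infDist_le hfst hsnd hμK hk hkP x
  have hupper := le_add_rpow_mul_W2_of_forall_coupling hm0 hmtop
    fun _ hfst hsnd => rpow_half_mul_kdist_le hfst hsnd hk hkP x y hball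
  rw [hT] at hlower hupper
  have := ENNReal.le_add_of_ofReal_le_ofReal_add (kdist_nonneg P k x) hT0 hlower
  have := ENNReal.le_add_of_ofReal_le_ofReal_add (add_nonneg dist_nonneg hr) hT0 hupper
  rw [abs_sub_le_iff]
  constructor <;> linarith

end Euclidean

theorem mul_rpow_rpow_neg_inv_mul_rpow_inv {α ℓ m : ℝ} (hα : 0 < α) (hℓ : 0 < ℓ) (hm : 0 ≤ m) :
    α * (α ^ (-(1/ℓ)) * m ^ (1/ℓ)) ^ ℓ = m := by
  rw [Real.mul_rpow (by positivity) (by positivity), ← Real.rpow_mul hα.le,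
    ← Real.rpow_mul hm, neg_mul, one_div_mul_cancel hℓ.ne', Real.rpow_neg_one, Real.rpow_one,
    ← mul_assoc, mul_inv_cancel₀ hα.ne', one_mul]

/-- **Exact Bound.** If `μ` is a probability measure of dimension at most `ℓ`
(with constant `α`) and compact support `K`, then for `m₀ = k/N`,
`‖d_{P,k} - d_K‖_∞ ≤ m₀^{-1/2} W₂(μ, U_P) + α^{-1/ℓ} m₀^{1/ℓ}`. -/
theorem exact_bound {d : ℕ} (μ : Measure (EuclideanSpace ℝ (Fin d)))
    [IsProbabilityMeasure μ] (K : Set (EuclideanSpace ℝ (Fin d)))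
    (hK : IsCompact K) (hsupp : msupp μ = K)
    (ℓ α : ℝ) (hℓ : 0 < ℓ) (hα : 0 < α) (hdim : HasDimLE μ ℓ α)
    (N k : ℕ) (P : Finset (EuclideanSpace ℝ (Fin d))) (hPN : P.card = N)
    (hk : 1 ≤ k) (hkN : k ≤ N) (m₀ : ℝ) (hm₀ : m₀ = (k : ℝ) / N)
    (x : EuclideanSpace ℝ (Fin d)) :
    |kdist P k x - Metric.infDist x K| ≤
      m₀ ^ (-(1 : ℝ)/2) * (W2 μ (unif P)).toReal + α ^ (-(1/ℓ)) * m₀ ^ (1/ℓ) := by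
  subst hPN hm₀
  have hμK : ∀ᵐ y ∂μ, y ∈ K := hsupp ▸ ae_mem_msupp μ
  have hN : 0 < P.card := by omega
  have hm₀ : 0 < (k : ℝ) / P.card := by positivity
  set r := α ^ (-(1/ℓ)) * ((k : ℝ) / P.card) ^ (1/ℓ)
  have hr : 0 < r := mul_pos (Real.rpow_pos_of_pos hα _) (Real.rpow_pos_of_pos hm₀ _)
  obtain ⟨y, hyK, hxy⟩ := hK.exists_infDist_eq_dist hμK.exists x
  have hball : (k / P.card : ℝ≥0∞) ≤ μ (closedBall y r) := by
    have := hdim.ofReal_min_le_measure_closedBall (hsupp ▸ hyK) hr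
    rwa [mul_rpow_rpow_neg_inv_mul_rpow_inv hα hℓ hm₀.le,
      min_eq_left (div_le_one_of_le₀ (by exact_mod_cast hkN) (by positivity)),
      ENNReal.ofReal_natCast_div_natCast k hN] at this
  exact abs_kdist_sub_infDist_le hK.isBounded hμK (by omega) hkN hxy hr.le hball
end
end

section
/- Let μ be a probability measure on ℝ^d with compact support K, of dimension at most ℓ with constant α > 0, and suppose K contains at least two points. Then for every ε with 0 < ε < diam(K), the complexity of μ satisfies N_μ(ε) ≤ 5^ℓ · α^{−1} · ε^{−ℓ}. -/
open MeasureTheory Metric Finset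
open scoped ENNReal NNReal

noncomputable section

/-- The complexity `N_μ(ε)` of a probability measure `μ` at scale `ε`: the minimum number
of points in the support of a finitely supported probability measure `ν` with
`W₂(μ,ν) ≤ ε` (as an extended number, `∞` if no such measure exists). -/
def complexity {d : ℕ} (μ : Measure (EuclideanSpace ℝ (Fin d))) (ε : ℝ) : ℝ≥0∞ :=
  sInf { c : ℝ≥0∞ | ∃ (S : Finset (EuclideanSpace ℝ (Fin d)))
    (ν : Measure (EuclideanSpace ℝ (Fin d))), IsProbabilityMeasure ν ∧
      ν (↑S)ᶜ = 0 ∧ W2 μ ν ≤ ENNReal.ofReal ε ∧ c = S.card }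

/-!
Take a maximal `ε`-separated subset `S` of the support `K`. The closed balls of radius `ε/2`
around its points are disjoint and each has measure at least `α (ε/2)^ℓ`, so
`#S ≤ 2^ℓ α⁻¹ ε^{-ℓ} ≤ 5^ℓ α⁻¹ ε^{-ℓ}`. By maximality `S` is an `ε`-cover of `K`, so pushing `μ`
forward along a measurable map sending each point to a point of `S` within distance `ε`
gives a measure on `S` at `W₂`-distance at most `ε`, the graph of the map being the coupling.
-/

section PackingAndSelection

variable {X : Type*} [PseudoMetricSpace X] [MeasurableSpace X] [OpensMeasurableSpace X]

lemma exists_measurable_selection_edist_le {S : Finset X} (hS : S.Nonempty) (δ : ℝ≥0∞) :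
    ∃ f : X → X, Measurable f ∧ (∀ x, f x ∈ S) ∧
      ∀ x, (∃ s ∈ S, edist x s ≤ δ) → edist x (f x) ≤ δ := by
  induction hS using Finset.Nonempty.cons_induction with
  | singleton a => exact ⟨fun _ ↦ a, measurable_const, by simp, by simp⟩
  | cons a S ha hS ih =>
    obtain ⟨f, hf, hfS, hfδ⟩ := ih
    refine ⟨fun x ↦ if edist x a ≤ δ then a else f x, ?_, fun x ↦ ?_, fun x hx ↦ ?_⟩
    · exact Measurable.ite (isClosed_closedEBall (a := a) (r := δ)).measurableSet
        measurable_const hf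
    · dsimp only
      split_ifs <;> simp [hfS]
    · dsimp only
      split_ifs with hxa
      · exact hxa
      · obtain ⟨s, hs, hxs⟩ := hx
        rcases Finset.mem_cons.1 hs with rfl | hs
        · exact absurd hxs hxa
        · exact hfδ x ⟨s, hs, hxs⟩

lemma card_mul_le_measure_univ_of_isSeparated (μ : Measure X) {S : Finset X} {ε : ℝ≥0} {r : ℝ}
    {c : ℝ≥0∞} (hS : IsSeparated ε (S : Set X)) (hr : 2 * r ≤ ε)
    (hball : ∀ x ∈ S, c ≤ μ (closedBall x r)) : S.card * c ≤ μ Set.univ := by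
  have hdisj : (S : Set X).PairwiseDisjoint fun x ↦ closedBall x r := by
    intro x hx y hy hxy
    have hsep : (ε : ℝ) < dist x y := by
      have : (ε : ℝ≥0∞) < edist x y := hS hx hy hxy
      rwa [edist_nndist, ENNReal.coe_lt_coe, ← NNReal.coe_lt_coe, coe_nndist] at this
    exact closedBall_disjoint_closedBall (by linarith)
  calc S.card * c = ∑ _x ∈ S, c := by rw [Finset.sum_const, nsmul_eq_mul]
    _ ≤ ∑ x ∈ S, μ (closedBall x r) := Finset.sum_le_sum hball
    _ = μ (⋃ x ∈ S, closedBall x r) :=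
      (measure_biUnion_finset hdisj fun _ _ ↦ measurableSet_closedBall).symm
    _ ≤ μ Set.univ := measure_mono (Set.subset_univ _)

lemma packingNumber_le_floor_inv (μ : Measure X) [IsProbabilityMeasure μ] {A : Set X}
    {ε : ℝ≥0} {r c : ℝ} (hc : 0 < c) (hr : 2 * r ≤ ε)
    (hball : ∀ x ∈ A, ENNReal.ofReal c ≤ μ (closedBall x r)) :
    packingNumber ε A ≤ ⌊c⁻¹⌋₊ := by
  refine iSup₂_le fun C hCA ↦ iSup_le fun hC ↦ ?_
  by_contra! hlt
  obtain ⟨T, hTC, hTcard⟩ := Set.exists_subset_encard_eq (Order.add_one_le_of_lt hlt)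
  obtain ⟨S, rfl⟩ := (Set.finite_of_encard_eq_coe hTcard).exists_finset_coe
  have hScard : S.card = ⌊c⁻¹⌋₊ + 1 := by exact_mod_cast hTcard
  have hpack := card_mul_le_measure_univ_of_isSeparated μ (hC.subset hTC) hr
    fun x hx ↦ hball x (hCA (hTC hx))
  rw [measure_univ, hScard, ← ENNReal.ofReal_natCast, ← ENNReal.ofReal_mul (by positivity),
    ENNReal.ofReal_le_one] at hpack
  have hfloor := Nat.lt_floor_add_one c⁻¹
  have hinv := inv_mul_cancel₀ hc.ne'
  push_cast at hpack
  nlinarith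

end PackingAndSelection

section Euclidean

variable {d : ℕ}

lemma measure_compl_msupp (μ : Measure (EuclideanSpace ℝ (Fin d))) : μ (msupp μ)ᶜ = 0 := by
  refine measure_null_of_locally_null _ fun x hx ↦ ?_
  simp only [msupp, Set.mem_compl_iff, Set.mem_ofPred_eq, not_forall, not_lt,
    nonpos_iff_eq_zero] at hx
  obtain ⟨U, hU, hxU, hμU⟩ := hx
  exact ⟨U, mem_nhdsWithin_of_mem_nhds (hU.mem_nhds hxU), hμU⟩

lemma W2_map_le {μ : Measure (EuclideanSpace ℝ (Fin d))} [IsProbabilityMeasure μ]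
    {f : EuclideanSpace ℝ (Fin d) → EuclideanSpace ℝ (Fin d)} (hf : Measurable f) {δ : ℝ≥0∞}
    (hδ : ∀ᵐ x ∂μ, edist x (f x) ≤ δ) : W2 μ (μ.map f) ≤ δ := by
  have hgraph : Measurable fun x ↦ (x, f x) := measurable_id.prodMk hf
  set π := μ.map fun x ↦ (x, f x)
  have hfst : π.map Prod.fst = μ := by
    rw [Measure.map_map measurable_fst hgraph]
    exact Measure.map_id
  have hsnd : π.map Prod.snd = μ.map f := Measure.map_map measurable_snd hgraph
  have hcost : ∫⁻ p, edist p.1 p.2 ^ 2 ∂π ≤ δ ^ 2 :=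
    calc ∫⁻ p, edist p.1 p.2 ^ 2 ∂π = ∫⁻ x, edist x (f x) ^ 2 ∂μ :=
          lintegral_map ((measurable_fst.edist measurable_snd).pow_const 2) hgraph
      _ ≤ ∫⁻ _, δ ^ 2 ∂μ := lintegral_mono_ae (hδ.mono fun x hx ↦ pow_le_pow_left₀ bot_le hx 2)
      _ = δ ^ 2 := by simp
  calc W2 μ (μ.map f) ≤ (∫⁻ p, edist p.1 p.2 ^ 2 ∂π) ^ (1 / 2 : ℝ) :=
        iInf_le_of_le π (iInf_le_of_le hfst (iInf_le _ hsnd))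
    _ ≤ (δ ^ 2) ^ (1 / 2 : ℝ) := ENNReal.rpow_le_rpow hcost (by norm_num)
    _ = δ := by simpa using ENNReal.pow_rpow_inv_natCast two_ne_zero δ

lemma complexity_le_card_of_isCover {μ : Measure (EuclideanSpace ℝ (Fin d))}
    [IsProbabilityMeasure μ] {K : Set (EuclideanSpace ℝ (Fin d))} (hK : μ Kᶜ = 0) {ε : ℝ≥0}
    {S : Finset (EuclideanSpace ℝ (Fin d))} (hS : IsCover ε K S) :
    complexity μ ε ≤ S.card := by
  have hKne : K.Nonempty := Set.nonempty_iff_ne_empty.2 fun h ↦ by simp [h] at hK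
  obtain ⟨f, hf, hfS, hfε⟩ := exists_measurable_selection_edist_le (hS.nonempty hKne) ε
  have hνS : μ.map f (↑S)ᶜ = 0 := by
    rw [Measure.map_apply hf S.measurableSet.compl, Set.preimage_compl,
      Set.eq_univ_of_forall (s := f ⁻¹' S) hfS, Set.compl_univ, measure_empty]
  have hfε_ae : ∀ᵐ x ∂μ, edist x (f x) ≤ ε := by
    filter_upwards [measure_eq_zero_iff_ae_notMem.1 hK] with x hx
    exact hfε x (hS (not_not.1 hx))
  refine sInf_le ⟨S, μ.map f, Measure.isProbabilityMeasure_map hf.aemeasurable, hνS, ?_, rfl⟩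
  rw [ENNReal.ofReal_coe_nnreal]
  exact W2_map_le hf hfε_ae

lemma complexity_le_packingNumber {μ : Measure (EuclideanSpace ℝ (Fin d))}
    [IsProbabilityMeasure μ] {K : Set (EuclideanSpace ℝ (Fin d))} (hK : μ Kᶜ = 0) {ε : ℝ≥0}
    (h : packingNumber ε K ≠ ⊤) : complexity μ ε ≤ packingNumber ε K := by
  have hfin : (maximalSeparatedSet ε K).Finite := by
    rw [← Set.encard_ne_top_iff, encard_maximalSeparatedSet h]
    exact h
  obtain ⟨S, hS⟩ := hfin.exists_finset_coe
  have hcover : IsCover ε K S := hS ▸ isCover_maximalSeparatedSet h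
  rw [← encard_maximalSeparatedSet h, ← hS, Set.encard_coe_eq_coe_finsetCard]
  simpa using complexity_le_card_of_isCover hK hcover

end Euclidean

theorem complexity_bound_general {d : ℕ} (μ : Measure (EuclideanSpace ℝ (Fin d)))
    [IsProbabilityMeasure μ] (K : Set (EuclideanSpace ℝ (Fin d)))
    (hsupp : msupp μ = K)
    (ℓ α : ℝ) (hℓ : 0 < ℓ) (hα : 0 < α) (hdim : HasDimLE μ ℓ α)
    (ε : ℝ) (hε : 0 < ε) (hεd : ENNReal.ofReal ε < EMetric.diam K) :
    complexity μ ε ≤ ENNReal.ofReal (5 ^ ℓ * α⁻¹ * ε ^ (-ℓ)) := by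
  lift ε to ℝ≥0 using hε.le
  set c := α * (ε / 2 : ℝ) ^ ℓ
  have hc : 0 < c := by positivity
  have hKc : μ Kᶜ = 0 := hsupp ▸ measure_compl_msupp μ
  have hball : ∀ x ∈ K, ENNReal.ofReal c ≤ μ (closedBall x (ε / 2)) := fun x hx ↦
    hdim x (hsupp ▸ hx) _ (by positivity)
      (hsupp ▸ (ENNReal.ofReal_le_ofReal (by linarith)).trans_lt hεd)
  have hpack : packingNumber ε K ≤ ⌊c⁻¹⌋₊ :=
    packingNumber_le_floor_inv μ hc (by linarith) hball
  have hinv : c⁻¹ ≤ 5 ^ ℓ * α⁻¹ * (ε : ℝ) ^ (-ℓ) := by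
    simp only [c]
    rw [Real.div_rpow ε.coe_nonneg zero_le_two, Real.rpow_neg ε.coe_nonneg]
    field_simp
    exact Real.rpow_le_rpow zero_le_two (by norm_num) hℓ.le
  calc complexity μ ε ≤ packingNumber ε K :=
        complexity_le_packingNumber hKc (ne_top_of_le_ne_top (by simp) hpack)
    _ ≤ (⌊c⁻¹⌋₊ : ℝ≥0∞) := by exact_mod_cast hpack
    _ ≤ ENNReal.ofReal (5 ^ ℓ * α⁻¹ * ε ^ (-ℓ)) := by
      rw [← ENNReal.ofReal_natCast]
      exact ENNReal.ofReal_le_ofReal ((Nat.floor_le (by positivity)).trans hinv)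

/-- If `μ` is a probability measure with compact support `K` (containing
at least two points) of dimension at most `ℓ` with constant `α`, then for every
`0 < ε < diam K`, the complexity satisfies `N_μ(ε) ≤ 5^ℓ α⁻¹ ε^{-ℓ}`. -/
theorem complexity_bound {d : ℕ} (μ : Measure (EuclideanSpace ℝ (Fin d)))
    [IsProbabilityMeasure μ] (K : Set (EuclideanSpace ℝ (Fin d)))
    (hK : IsCompact K) (hsupp : msupp μ = K)
    (htwo : ∃ x ∈ K, ∃ y ∈ K, x ≠ y)
    (ℓ α : ℝ) (hℓ : 0 < ℓ) (hα : 0 < α) (hdim : HasDimLE μ ℓ α)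
    (ε : ℝ) (hε : 0 < ε) (hεd : ENNReal.ofReal ε < EMetric.diam K) :
    complexity μ ε ≤ ENNReal.ofReal (5 ^ ℓ * α⁻¹ * ε ^ (-ℓ)) :=
  complexity_bound_general μ K hsupp ℓ α hℓ hα hdim ε hε hεd

end
end

section
/- Let P ⊆ ℝ^d be a finite set of N points, let 1 ≤ k ≤ N be an integer, set m₀ = k/N, and let U_P be the uniform probability measure on P. Then for every x ∈ ℝ^d, the distance to the measure U_P with parameter m₀ satisfies d_{U_P,m₀}(x)² = min over subsets C ⊆ P with |C| = k of (1/k) Σ_{p∈C} ‖x − p‖²; i.e., d_{U_P,m₀}(x) is the square root of the average squared distance from x to its k nearest neighbors in P. -/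
/-!
If `d₀ ≤ ⋯ ≤ d_{N-1}` are the distances from `x` to the points of `P` in increasing order, a
closed ball around `x` has `U_P`-mass at least `m` iff it contains more than `j` points, where
`m ∈ (j/N, (j+1)/N]`; so `m ↦ δ_{U_P,m}(x)` is the step function equal to `d_j` there, and
integrating it over `(0, k/N]` gives `d_{U_P,k/N}(x)² = k⁻¹ ∑_{j<k} d_j²`. The `k` nearest points
realise the minimum because the `i`-th smallest element of any `k`-subset has rank at least `i`.
-/

open MeasureTheory Metric Finset
open scoped ENNReal NNReal

noncomputable section

/-- `δ_{μ,m}(x)`: the radius of the smallest closed ball centered at `x` carrying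
`μ`-mass at least `m`. -/
def deltam {d : ℕ} (μ : Measure (EuclideanSpace ℝ (Fin d))) (m : ℝ)
    (x : EuclideanSpace ℝ (Fin d)) : ℝ :=
  sInf { r : ℝ | 0 ≤ r ∧ ENNReal.ofReal m ≤ μ (Metric.closedBall x r) }

/-- The distance to the measure `μ` with mass parameter `m₀`:
`d_{μ,m₀}(x) = (m₀⁻¹ ∫_0^{m₀} δ_{μ,m}(x)² dm)^{1/2}`. -/
def dtm {d : ℕ} (μ : Measure (EuclideanSpace ℝ (Fin d))) (m₀ : ℝ)
    (x : EuclideanSpace ℝ (Fin d)) : ℝ :=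
  Real.sqrt (m₀⁻¹ * ∫ m in Set.Ioc (0 : ℝ) m₀, (deltam μ m x) ^ 2)

open Function

section Enumeration

variable {α β : Type*}

theorem Finset.exists_enum_monotone_comp [LinearOrder β] (s : Finset α) (f : α → β) :
    ∃ q : Fin #s → α, Injective q ∧ Set.range q = s ∧ Monotone (f ∘ q) := by
  let g : Fin #s → β := fun i => f (s.equivFin.symm i)
  refine ⟨fun i => s.equivFin.symm (Tuple.sort g i), ?_, ?_, Tuple.monotone_sort g⟩
  · exact Subtype.val_injective.comp (s.equivFin.symm.injective.comp (Tuple.sort g).injective)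
  · change Set.range (Subtype.val ∘ (s.equivFin.symm ∘ Tuple.sort g)) = s
    rw [(s.equivFin.symm.surjective.comp (Tuple.sort g).surjective).range_comp,
      Subtype.range_coe_subtype, Finset.setOfPred_mem]

theorem Monotone.lt_card_filter_le_iff [LinearOrder β] {n : ℕ} {g : Fin n → β} (hg : Monotone g)
    (j : Fin n) (r : β) : (j : ℕ) < #{i | g i ≤ r} ↔ g j ≤ r := by
  constructor
  · intro hlt
    by_contra hr
    have hsub : ({i | g i ≤ r} : Finset (Fin n)) ⊆ Iio j := fun i hi => by
      simp only [mem_filter, mem_univ, true_and, mem_Iio] at hi ⊢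
      exact lt_of_not_ge fun hji => hr ((hg hji).trans hi)
    have := card_le_card hsub
    rw [Fin.card_Iio] at this
    omega
  · intro hjr
    have hsub : Iic j ⊆ ({i | g i ≤ r} : Finset (Fin n)) := fun i hi => by
      simp only [mem_filter, mem_univ, true_and, mem_Iic] at hi ⊢
      exact (hg hi).trans hjr
    have := card_le_card hsub
    rw [Fin.card_Iic] at this
    omega

theorem Fin.val_le_of_strictMono {k n : ℕ} {f : Fin k → Fin n} (hf : StrictMono f) (j : Fin k) :
    (j : ℕ) ≤ f j := by
  simpa using card_le_card_of_injOn f (s := Iio j) (t := Iio (f j))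
    (fun i hi => by simpa using hf (by simpa using hi)) hf.injective.injOn

variable {M : Type*} [AddCommMonoid M] [PartialOrder M] [IsOrderedAddMonoid M]

theorem Monotone.sum_castLE_le_sum {n k : ℕ} (hkn : k ≤ n) {h : Fin n → M} (hh : Monotone h)
    {I : Finset (Fin n)} (hI : #I = k) :
    ∑ j : Fin k, h (Fin.castLE hkn j) ≤ ∑ i ∈ I, h i := by
  rw [← I.map_orderEmbOfFin_univ hI, sum_map]
  exact sum_le_sum fun j _ => hh (Fin.val_le_of_strictMono (I.orderEmbOfFin hI).strictMono j)

theorem isLeast_sum_powersetCard {s : Finset α} {q : Fin #s → α} (hq : Injective q)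
    (hrange : Set.range q = s) {φ : α → M} (hφ : Monotone (φ ∘ q)) {k : ℕ} (hk : k ≤ #s) :
    IsLeast {y | ∃ C ∈ s.powersetCard k, y = ∑ p ∈ C, φ p}
      (∑ j : Fin k, φ (q (Fin.castLE hk j))) := by
  classical
  have hqk : Injective (q ∘ Fin.castLE hk) := hq.comp (Fin.castLE_injective hk)
  refine ⟨⟨univ.image (q ∘ Fin.castLE hk), ?_, by rw [sum_image hqk.injOn]; rfl⟩, ?_⟩
  · refine mem_powersetCard.2 ⟨fun p hp => ?_, by rw [card_image_of_injective _ hqk, card_fin]⟩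
    obtain ⟨j, -, rfl⟩ := mem_image.1 hp
    exact mem_coe.1 (hrange ▸ Set.mem_range_self _)
  · rintro y ⟨C, hC, rfl⟩
    obtain ⟨hCs, hCk⟩ := mem_powersetCard.1 hC
    have hC_range : ∀ p ∈ C, p ∈ Set.range q := fun p hp => hrange ▸ mem_coe.2 (hCs hp)
    have hI : #(C.preimage q hq.injOn) = k := by
      rw [card_preimage, filter_true_of_mem hC_range, hCk]
    rw [← sum_preimage q C hq.injOn φ fun p hp hp' => absurd (hC_range p hp) hp']
    exact hφ.sum_castLE_le_sum hk hI

end Enumeration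

theorem intervalIntegral.integral_eq_sum_of_eqOn_Ioc {f : ℝ → ℝ} {a : ℕ → ℝ} (ha : Monotone a)
    {k : ℕ} (c : Fin k → ℝ)
    (hf : ∀ j : Fin k, Set.EqOn f (fun _ => c j) (Set.Ioc (a j) (a (j + 1)))) :
    ∫ t in a 0..a k, f t = ∑ j : Fin k, (a (j + 1) - a j) * c j := by
  have piece (j : Fin k) : IntervalIntegrable f volume (a j) (a (j + 1)) ∧
      ∫ t in a j..a (j + 1), f t = (a (j + 1) - a j) * c j := by
    have hle : a j ≤ a (j + 1) := ha (Nat.le_succ j)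
    refine ⟨(intervalIntegrable_iff_integrableOn_Ioc_of_le hle).2
      ((integrableOn_const measure_Ioc_lt_top.ne).congr_fun (hf j).symm measurableSet_Ioc), ?_⟩
    rw [intervalIntegral.integral_of_le hle, setIntegral_congr_fun measurableSet_Ioc (hf j),
      setIntegral_const, Real.volume_real_Ioc_of_le hle, smul_eq_mul]
  rw [← intervalIntegral.sum_integral_adjacent_intervals fun j hj => (piece ⟨j, hj⟩).1, sum_range]
  exact sum_congr rfl fun j _ => (piece j).2

theorem ENNReal.ofReal_le_natCast_div_iff {n j c : ℕ} {m : ℝ}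
    (hm : m ∈ Set.Ioc (j / n : ℝ) ((j + 1) / n)) : ENNReal.ofReal m ≤ c / n ↔ j < c := by
  obtain ⟨hjm, hmj⟩ := hm
  have hn : (0 : ℝ) < n := by
    rcases n.eq_zero_or_pos with rfl | hn
    · norm_num at hjm hmj; linarith
    · exact_mod_cast hn
  rw [← ENNReal.ofReal_natCast c, ← ENNReal.ofReal_natCast n, ← ENNReal.ofReal_div_of_pos hn,
    ENNReal.ofReal_le_ofReal_iff (by positivity)]
  constructor
  · intro hmc
    by_contra! hcj
    have : (c / n : ℝ) ≤ j / n := by gcongr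
    linarith
  · intro hjc
    calc m ≤ (j + 1) / n := hmj
      _ ≤ c / n := by gcongr; exact_mod_cast hjc

variable {d : ℕ}

theorem deltam_eq_of_forall_le_iff {μ : Measure (EuclideanSpace ℝ (Fin d))} {m a : ℝ}
    {x : EuclideanSpace ℝ (Fin d)} (ha : 0 ≤ a)
    (h : ∀ r, ENNReal.ofReal m ≤ μ (closedBall x r) ↔ a ≤ r) : deltam μ m x = a := by
  have hset : {r : ℝ | 0 ≤ r ∧ ENNReal.ofReal m ≤ μ (closedBall x r)} = Set.Ici a := by
    ext r
    simp only [Set.mem_ofPred_eq, Set.mem_Ici, h r]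
    exact ⟨And.right, fun har => ⟨ha.trans har, har⟩⟩
  rw [deltam, hset, csInf_Ici]

open Classical in
theorem unif_apply (P : Finset (EuclideanSpace ℝ (Fin d))) (A : Set (EuclideanSpace ℝ (Fin d))) :
    unif P A = #{p ∈ P | p ∈ A} / #P := by
  rw [unif, Measure.smul_apply, Measure.finsetSum_apply, smul_eq_mul]
  simp_rw [Measure.dirac_apply, Set.indicator_apply, Pi.one_apply]
  rw [sum_boole, ENNReal.div_eq_inv_mul]

theorem deltam_unif_eq {P : Finset (EuclideanSpace ℝ (Fin d))} {x : EuclideanSpace ℝ (Fin d)}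
    {q : Fin #P → EuclideanSpace ℝ (Fin d)} (hq : Injective q) (hrange : Set.range q = P)
    (hmono : Monotone fun i => ‖x - q i‖) (j : Fin #P) {m : ℝ}
    (hm : m ∈ Set.Ioc (j / #P : ℝ) ((j + 1) / #P)) : deltam (unif P) m x = ‖x - q j‖ := by
  classical
  have hP : P = univ.image q := by rw [← coe_inj, coe_image, coe_univ, Set.image_univ, hrange]
  refine deltam_eq_of_forall_le_iff (norm_nonneg _) fun r => ?_
  have hcount : #{p ∈ P | p ∈ closedBall x r} = #{i | ‖x - q i‖ ≤ r} := by
    conv_lhs => rw [hP, filter_image, card_image_of_injective _ hq]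
    simp only [mem_closedBall', dist_eq_norm]
  rw [unif_apply, hcount, ENNReal.ofReal_le_natCast_div_iff hm, hmono.lt_card_filter_le_iff]

theorem dtm_unif_sq {P : Finset (EuclideanSpace ℝ (Fin d))} {x : EuclideanSpace ℝ (Fin d)}
    {q : Fin #P → EuclideanSpace ℝ (Fin d)} (hq : Injective q) (hrange : Set.range q = P)
    (hmono : Monotone fun i => ‖x - q i‖) {k : ℕ} (hk : k ≤ #P) :
    dtm (unif P) (k / #P) x ^ 2 = (k : ℝ)⁻¹ * ∑ j : Fin k, ‖x - q (Fin.castLE hk j)‖ ^ 2 := by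
  have hsteps : Monotone fun j : ℕ => (j / #P : ℝ) := fun i j hij =>
    div_le_div_of_nonneg_right (Nat.cast_le.2 hij) (Nat.cast_nonneg _)
  have hintegral := intervalIntegral.integral_eq_sum_of_eqOn_Ioc hsteps
    (fun j => ‖x - q (Fin.castLE hk j)‖ ^ 2) (f := fun m => deltam (unif P) m x ^ 2)
    fun j m hm => congrArg (· ^ 2)
      (deltam_unif_eq hq hrange hmono (Fin.castLE hk j) (by exact_mod_cast hm))
  have hwidth (j : ℕ) : ((j + 1 : ℕ) / #P - j / #P : ℝ) = (#P : ℝ)⁻¹ := by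
    push_cast; ring
  simp only [Nat.cast_zero, zero_div, hwidth, ← mul_sum] at hintegral
  rw [dtm, Real.sq_sqrt, ← intervalIntegral.integral_of_le (by positivity), hintegral]
  · rcases (#P).eq_zero_or_pos with hP | hP
    · obtain rfl : k = 0 := by omega
      simp
    · field_simp
  · exact mul_nonneg (by positivity) (setIntegral_nonneg measurableSet_Ioc fun _ _ => sq_nonneg _)

theorem dtm_unif_eq_kdist_sq_general {d : ℕ} (N k : ℕ)
    (P : Finset (EuclideanSpace ℝ (Fin d))) (hPN : P.card = N)
    (hkN : k ≤ N) (x : EuclideanSpace ℝ (Fin d)) :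
    (dtm (unif P) ((k : ℝ) / N) x) ^ 2 =
      sInf { y : ℝ | ∃ C ∈ P.powersetCard k, y = (k : ℝ)⁻¹ * ∑ p ∈ C, ‖x - p‖ ^ 2 } := by
  subst hPN
  obtain ⟨q, hq, hrange, hmono⟩ := P.exists_enum_monotone_comp (fun p => ‖x - p‖)
  have hmono_sq : Monotone ((fun p => ‖x - p‖ ^ 2) ∘ q) := fun i j hij =>
    pow_le_pow_left₀ (norm_nonneg _) (hmono hij) 2
  have hleast := (monotone_mul_left_of_nonneg (inv_nonneg.2 (Nat.cast_nonneg k))).map_isLeast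
    (isLeast_sum_powersetCard hq hrange hmono_sq hkN)
  rw [dtm_unif_sq hq hrange hmono hkN, ← hleast.csInf_eq]
  congr 1
  ext y
  simp [eq_comm]

/-- For the uniform measure on a set `P` of `N` points and `m₀ = k/N`,
the squared distance to the measure at `x` is the minimum, over `k`-point subsets `C ⊆ P`,
of the average squared distance from `x` to the points of `C`; i.e. `d_{U_P,m₀}(x)` is the
square root of the average squared distance from `x` to its `k` nearest neighbors in `P`. -/
theorem dtm_unif_eq_kdist_sq {d : ℕ} (N k : ℕ)
    (P : Finset (EuclideanSpace ℝ (Fin d))) (hPN : P.card = N)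
    (hk : 1 ≤ k) (hkN : k ≤ N) (x : EuclideanSpace ℝ (Fin d)) :
    (dtm (unif P) ((k : ℝ) / N) x) ^ 2 =
      sInf { y : ℝ | ∃ C ∈ P.powersetCard k, y = (k : ℝ)⁻¹ * ∑ p ∈ C, ‖x - p‖ ^ 2 } :=
  dtm_unif_eq_kdist_sq_general N k P hPN hkN x

end
end
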